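/- Let Ω be a countably infinite set and let u, v, f ∈ Ω^Ω. If u is surjective, c(u) > 0, c(v) = c(f) = ∞, k(f) < ∞, d(v) < ∞, and d(f) < ∞, then f belongs to the subsemigroup of Ω^Ω generated by S_{1,2,3,4,5} ∪ {u, v}. -/

import Mathlib

/-!
Setting: `Ω` is a countably infinite set, `Function.End Ω = Ω → Ω` is the full
transformation semigroup (a subset is closed under composition in one order iff
it is closed in the other, so the lattice of subsemigroups is unaffected by the
left-to-right convention of the paper).
-/

open Cardinal

/-- A transversal of `f`: a set on which `f` is injective and whose image is all of `Ωf`. -/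
def IsTransversal {Ω : Type*} (f : Ω → Ω) (T : Set Ω) : Prop :=
  Set.InjOn f T ∧ f '' T = Set.range f

/-- The defect `d(f) = |Ω \ Ωf|`. -/
noncomputable def defect {Ω : Type*} (f : Ω → Ω) : Cardinal :=
  #((Set.range f)ᶜ : Set Ω)

/-- The collapse `c(f) = |Ω \ Σ|` for a transversal `Σ` of `f` (the value is
independent of the choice of transversal, so the infimum is the common value). -/
noncomputable def collapse {Ω : Type*} (f : Ω → Ω) : Cardinal :=
  ⨅ T : {T : Set Ω // IsTransversal f T}, #(T.1ᶜ : Set Ω)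

/-- The infinite contraction index `k(f) = |{α : αf⁻¹ infinite}|`. -/
noncomputable def contract {Ω : Type*} (f : Ω → Ω) : Cardinal :=
  #({α : Ω | (f ⁻¹' {α}).Infinite} : Set Ω)

def S1 {Ω : Type*} : Set (Function.End Ω) := {f | collapse f = 0 ∨ 0 < defect f}
def S2 {Ω : Type*} : Set (Function.End Ω) := {f | 0 < collapse f ∨ defect f = 0}
def S3 {Ω : Type*} : Set (Function.End Ω) := {f | collapse f < ℵ₀ ∨ ℵ₀ ≤ defect f}
def S4 {Ω : Type*} : Set (Function.End Ω) := {f | ℵ₀ ≤ collapse f ∨ defect f < ℵ₀}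
def S5 {Ω : Type*} : Set (Function.End Ω) := {f | contract f < ℵ₀}

/-- `Sym(Ω)`, the bijections of `Ω`. -/
def SymOmega {Ω : Type*} : Set (Function.End Ω) := {f | Function.Bijective f}

/-- `U = {f : d(f) = ∞ or 0 < c(f) < ∞} ∪ Sym(Ω)`. -/
def SetU {Ω : Type*} : Set (Function.End Ω) :=
  {f | ℵ₀ ≤ defect f ∨ (0 < collapse f ∧ collapse f < ℵ₀)} ∪ SymOmega

/-- `V = {f : c(f) = ∞ or 0 < d(f) < ∞} ∪ Sym(Ω)`. -/
def SetV {Ω : Type*} : Set (Function.End Ω) :=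
  {f | ℵ₀ ≤ collapse f ∨ (0 < defect f ∧ defect f < ℵ₀)} ∪ SymOmega

/-- `S_{1,2,3,4,5}`. -/
def S12345 {Ω : Type*} : Set (Function.End Ω) := S1 ∩ S2 ∩ S3 ∩ S4 ∩ S5

/-- The family `S_1, …, S_5` indexed by `Fin 5`. -/
def SS {Ω : Type*} : Fin 5 → Set (Function.End Ω) := ![S1, S2, S3, S4, S5]


/-!
Write `f = u ∘ (τ ∘ f)` for a right inverse `τ` of `u` whose range is a transversal of `u`
of minimal co-size. Then `τ ∘ f` has the kernel of `f` and defect `c(u) + d(f)`. If `c(u)` is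
infinite, `τ ∘ f` already lies in `S_{1,2,3,4,5}`. Otherwise `0 < d(τ ∘ f) < ∞`, and a map `g`
of this kind factors as `g = s ∘ v ∘ h`: `h` relabels the range of `g` bijectively onto a
transversal of `v` with one point removed (so `h` keeps the kernel of `g` and gets infinite
defect), and `s` undoes `v` on that set and sends everything else to one point of the range of
`g`, which gives `0 < c(s) < ∞` and `d(s) = d(g)`.
-/

open Cardinal Function Set

variable {Ω : Type*}

lemma exists_isTransversal (g : Ω → Ω) : ∃ T : Set Ω, IsTransversal g T := by
  choose σ hσ using fun b : range g => b.2
  refine ⟨range σ, ?_, (image_subset_range _ _).antisymm ?_⟩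
  · rintro _ ⟨a, rfl⟩ _ ⟨b, rfl⟩ hab
    rw [Subtype.ext ((hσ a).symm.trans (hab.trans (hσ b)))]
  · rintro _ ⟨x, rfl⟩
    exact ⟨σ ⟨g x, x, rfl⟩, mem_range_self _, hσ _⟩

instance (g : Ω → Ω) : Nonempty {T : Set Ω // IsTransversal g T} :=
  let ⟨T, hT⟩ := exists_isTransversal g
  ⟨⟨T, hT⟩⟩

lemma collapse_le {g : Ω → Ω} {T : Set Ω} (hT : IsTransversal g T) :
    collapse g ≤ #(Tᶜ : Set Ω) :=
  ciInf_le' _ (⟨T, hT⟩ : {T : Set Ω // IsTransversal g T})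

lemma exists_isTransversal_mk_compl_eq_collapse (g : Ω → Ω) :
    ∃ T : Set Ω, IsTransversal g T ∧ #(Tᶜ : Set Ω) = collapse g :=
  let ⟨⟨T, hT⟩, hTc⟩ := ciInf_mem fun T : {T : Set Ω // IsTransversal g T} => #(T.1ᶜ : Set Ω)
  ⟨T, hT, hTc⟩

lemma collapse_pos_of_not_injective {g : Ω → Ω} (hg : ¬ Injective g) : 0 < collapse g := by
  obtain ⟨T, hT, hTc⟩ := exists_isTransversal_mk_compl_eq_collapse g
  refine pos_iff_ne_zero.2 fun h0 => hg ?_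
  have hT_univ : T = Set.univ := by
    rw [h0, mk_eq_zero_iff, isEmpty_subtype] at hTc
    exact eq_univ_of_forall fun x => not_not.1 (hTc x)
  exact injOn_univ.1 (hT_univ ▸ hT.1)

lemma contract_eq_zero_of_collapse_lt_aleph0 {g : Ω → Ω} (hg : collapse g < ℵ₀) :
    contract g = 0 := by
  obtain ⟨T, hT, hTc⟩ := exists_isTransversal_mk_compl_eq_collapse g
  have hfin : (Tᶜ : Set Ω).Finite := lt_aleph0_iff_set_finite.1 (hTc ▸ hg)
  have hfibre : ∀ α, (g ⁻¹' {α}).Finite := fun α => by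
    have hsub : g ⁻¹' {α} ⊆ (g ⁻¹' {α} ∩ T) ∪ Tᶜ := fun x hx => by
      by_cases hxT : x ∈ T
      · exact Or.inl ⟨hx, hxT⟩
      · exact Or.inr hxT
    refine ((Subsingleton.finite ?_).union hfin).subset hsub
    exact fun x hx y hy => hT.1 hx.2 hy.2 (hx.1.trans hy.1.symm)
  rw [contract, mk_eq_zero_iff, isEmpty_subtype]
  exact fun α => not_not.2 (hfibre α)

section SameKernel

variable {g h : Ω → Ω} (hker : ∀ x y, h x = h y ↔ g x = g y)
include hker

lemma IsTransversal.of_ker_eq {T : Set Ω} (hT : IsTransversal g T) : IsTransversal h T := by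
  refine ⟨fun x hx y hy hxy => hT.1 hx hy ((hker x y).1 hxy),
    (image_subset_range _ _).antisymm ?_⟩
  rintro _ ⟨x, rfl⟩
  obtain ⟨t, ht, hgt⟩ : g x ∈ g '' T := hT.2 ▸ mem_range_self x
  exact ⟨t, ht, (hker t x).2 hgt⟩

lemma collapse_eq_of_ker_eq : collapse h = collapse g := by
  have hTr : IsTransversal h = IsTransversal g := funext fun T =>
    propext ⟨.of_ker_eq fun x y => (hker x y).symm, .of_ker_eq hker⟩
  rw [collapse, collapse, hTr]

lemma contract_le_of_ker_eq : contract h ≤ contract g := by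
  have hpick : ∀ α : {α | (h ⁻¹' {α}).Infinite}, ∃ x, h x = α ∧ h ⁻¹' {(α : Ω)} = g ⁻¹' {g x} :=
    fun α => let ⟨x, hx⟩ := α.2.nonempty
      ⟨x, hx, ext fun y => (show h y = α ↔ g y = g x from hx ▸ hker y x)⟩
  choose x hx hfibre using hpick
  refine mk_le_of_injective (f := fun α => (⟨g (x α), show (g ⁻¹' {g (x α)}).Infinite from
    hfibre α ▸ α.2⟩ : {β | (g ⁻¹' {β}).Infinite})) fun a b hab => ?_
  exact Subtype.ext ((hx a).symm.trans (((hker _ _).2 (congrArg Subtype.val hab)).trans (hx b)))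

end SameKernel

lemma defect_comp {τ : Ω → Ω} (hτ : Injective τ) (g : Ω → Ω) :
    defect (τ ∘ g) = defect τ + defect g := by
  rw [defect, range_comp, hτ.compl_image_eq, union_comm,
    mk_union_of_disjoint (disjoint_compl_left.mono_right (image_subset_range _ _)),
    mk_image_eq hτ]
  rfl

lemma infinite_range_of_defect_lt_aleph0 [Infinite Ω] {g : Ω → Ω} (hg : defect g < ℵ₀) :
    (range g).Infinite :=
  compl_compl (range g) ▸ (lt_aleph0_iff_set_finite.1 hg).infinite_compl

lemma IsTransversal.exists_rightInverse_range_eq {u : Ω → Ω} (hu : Surjective u) {T : Set Ω}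
    (hT : IsTransversal u T) : ∃ τ : Ω → Ω, RightInverse τ u ∧ range τ = T := by
  have hlift : ∀ b, ∃ t ∈ T, u t = b := fun b => (hT.2.symm ▸ hu b : b ∈ u '' T)
  choose τ hτT huτ using hlift
  exact ⟨τ, huτ, (range_subset_iff.2 hτT).antisymm fun t ht =>
    ⟨u t, hT.1 (hτT _) ht (huτ _)⟩⟩

lemma mem_S12345_of_aleph0_le {g : Function.End Ω} (hc : ℵ₀ ≤ collapse g)
    (hd : ℵ₀ ≤ defect g) (hk : contract g < ℵ₀) : g ∈ S12345 :=
  ⟨⟨⟨⟨Or.inr (aleph0_pos.trans_le hd), Or.inl (aleph0_pos.trans_le hc)⟩, Or.inr hd⟩,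
    Or.inl hc⟩, hk⟩

lemma mem_S12345_of_pos_of_lt_aleph0 {g : Function.End Ω} (hc0 : 0 < collapse g)
    (hc : collapse g < ℵ₀) (hd0 : 0 < defect g) (hd : defect g < ℵ₀) : g ∈ S12345 :=
  ⟨⟨⟨⟨Or.inr hd0, Or.inl hc0⟩, Or.inl hc⟩, Or.inr hd⟩,
    (contract_eq_zero_of_collapse_lt_aleph0 hc).trans_lt aleph0_pos⟩

lemma extend_mem_S12345 {A : Set Ω} {w : A → Ω} (hw : Injective w) (a₀ : A)
    (hA0 : 0 < #(Aᶜ : Set Ω)) (hA : #(Aᶜ : Set Ω) < ℵ₀)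
    (hw0 : (range w)ᶜ.Nonempty) (hwfin : (range w)ᶜ.Finite) :
    (extend w Subtype.val (fun _ => (a₀ : Ω)) : Function.End Ω) ∈ S12345 := by
  set s := extend w Subtype.val (fun _ => (a₀ : Ω))
  have hsw : ∀ a, s (w a) = a := hw.extend_apply _ _
  have hs_out : ∀ y ∉ range w, s y = a₀ := fun y hy => extend_apply' _ _ _ hy
  have hrange : range s = A := by
    refine (range_subset_iff.2 fun y => ?_).antisymm fun a ha => ⟨w ⟨a, ha⟩, hsw _⟩
    by_cases hy : y ∈ range w
    · obtain ⟨a, rfl⟩ := hy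
      exact hsw a ▸ a.2
    · exact hs_out y hy ▸ a₀.2
  have hT : IsTransversal s (range w) := by
    refine ⟨?_, ?_⟩
    · rintro _ ⟨a, rfl⟩ _ ⟨b, rfl⟩ hab
      rw [hsw, hsw] at hab
      rw [Subtype.ext hab]
    · rw [← range_comp, hrange, show s ∘ w = Subtype.val from funext hsw, Subtype.range_coe]
  have hninj : ¬ Injective s := fun hinj => by
    obtain ⟨y, hy⟩ := hw0
    exact hy ⟨a₀, hinj ((hsw a₀).trans (hs_out y hy).symm)⟩
  refine mem_S12345_of_pos_of_lt_aleph0 (collapse_pos_of_not_injective hninj)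
    ((collapse_le hT).trans_lt (lt_aleph0_iff_set_finite.2 hwfin)) ?_ ?_
  · rwa [defect, hrange]
  · rwa [defect, hrange]

lemma mem_S12345_of_ker_eq {g h : Function.End Ω} (hker : ∀ x y, h x = h y ↔ g x = g y)
    (hcg : ℵ₀ ≤ collapse g) (hkg : contract g < ℵ₀) (hdh : ℵ₀ ≤ defect h) : h ∈ S12345 :=
  mem_S12345_of_aleph0_le (collapse_eq_of_ker_eq hker ▸ hcg) hdh
    ((contract_le_of_ker_eq hker).trans_lt hkg)

lemma exists_mul_mul_eq_of_defect_lt_aleph0 [Countable Ω] [Infinite Ω] {v g : Function.End Ω}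
    (hcv : ℵ₀ ≤ collapse v) (hdv : defect v < ℵ₀) (hcg : ℵ₀ ≤ collapse g)
    (hkg : contract g < ℵ₀) (hdg0 : 0 < defect g) (hdg : defect g < ℵ₀) :
    ∃ s ∈ S12345, ∃ h ∈ S12345, s * (v * h) = g := by
  obtain ⟨Tv, hTv⟩ := exists_isTransversal v
  have hTv_inf : Tv.Infinite := (hTv.2 ▸ infinite_range_of_defect_lt_aleph0 hdv).of_image v
  obtain ⟨t₁, ht₁⟩ := hTv_inf.nonempty
  set T' := Tv \ {t₁}
  have : Infinite (range g) := (infinite_range_of_defect_lt_aleph0 hdg).to_subtype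
  have : Infinite T' := (hTv_inf.sdiff (finite_singleton t₁)).to_subtype
  obtain ⟨e⟩ : Nonempty (range g ≃ T') := Cardinal.eq.1 (by rw [mk_eq_aleph0, mk_eq_aleph0])
  let h : Function.End Ω := fun x => e (rangeFactorization g x)
  let w : range g → Ω := fun b => v (e b)
  have hw : Injective w := fun a b hab => e.injective (Subtype.ext (hTv.1 (e a).2.1 (e b).2.1 hab))
  have hrange_w : range w = range v \ {v t₁} := by
    rw [← hTv.2, ← image_singleton (f := v), ← hTv.1.image_sdiff_subset (singleton_subset_iff.2 ht₁)]
    ext y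
    constructor
    · rintro ⟨b, rfl⟩
      exact mem_image_of_mem v (e b).2
    · rintro ⟨t, ht, rfl⟩
      exact ⟨e.symm ⟨t, ht⟩, by simp [w]⟩
  have hvt₁ : v t₁ ∉ range w := fun hv => (hrange_w ▸ hv).2 rfl
  have hwfin : (range w)ᶜ.Finite := by
    rw [hrange_w, compl_sdiff]
    exact (finite_singleton _).union (lt_aleph0_iff_set_finite.1 hdv)
  obtain ⟨x₀⟩ := (inferInstance : Nonempty Ω)
  let a₀ : range g := ⟨g x₀, mem_range_self x₀⟩
  have hker : ∀ x y, h x = h y ↔ g x = g y := fun x y =>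
    Subtype.val_injective.eq_iff.trans (e.injective.eq_iff.trans Subtype.ext_iff)
  have hdh : ℵ₀ ≤ defect h := hcv.trans ((collapse_le hTv).trans
    (mk_le_mk_of_subset (compl_subset_compl.2 (range_subset_iff.2 fun x => (e _).2.1))))
  exact ⟨extend w Subtype.val (fun _ => (a₀ : Ω)),
    extend_mem_S12345 hw a₀ hdg0 hdg ⟨v t₁, hvt₁⟩ hwfin,
    h, mem_S12345_of_ker_eq hker hcg hkg hdh, funext fun x =>
      hw.extend_apply Subtype.val (fun _ => (a₀ : Ω)) (rangeFactorization g x)⟩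

theorem stmt10 (Ω : Type) [Countable Ω] [Infinite Ω] (u v f : Function.End Ω)
    (hu : Function.Surjective u) (hcu : 0 < collapse u)
    (hcv : ℵ₀ ≤ collapse v) (hcf : ℵ₀ ≤ collapse f) (hkf : contract f < ℵ₀)
    (hdv : defect v < ℵ₀) (hdf : defect f < ℵ₀) :
    f ∈ Subsemigroup.closure (S12345 ∪ {u, v}) := by
  obtain ⟨T, hT, hTc⟩ := exists_isTransversal_mk_compl_eq_collapse u
  obtain ⟨τ, huτ, rfl⟩ := hT.exists_rightInverse_range_eq hu
  let f₁ : Function.End Ω := τ ∘ f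
  have hker : ∀ x y, f₁ x = f₁ y ↔ f x = f y := fun _ _ => huτ.injective.eq_iff
  have hdf₁ : defect f₁ = collapse u + defect f :=
    (defect_comp huτ.injective f).trans (congrArg (· + defect f) hTc)
  have hcf₁ : ℵ₀ ≤ collapse f₁ := collapse_eq_of_ker_eq hker ▸ hcf
  have hkf₁ : contract f₁ < ℵ₀ := (contract_le_of_ker_eq hker).trans_lt hkf
  have hfac : u * f₁ = f := funext fun x => huτ (f x)
  rw [← hfac]
  refine mul_mem (Subsemigroup.subset_closure (Or.inr (mem_insert u _))) ?_
  rcases lt_or_ge (collapse u) ℵ₀ with hcu_fin | hcu_inf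
  · obtain ⟨s, hs, h, hh, hsvh⟩ := exists_mul_mul_eq_of_defect_lt_aleph0 hcv hdv hcf₁ hkf₁
      (hdf₁ ▸ hcu.trans_le le_self_add) (hdf₁ ▸ add_lt_aleph0 hcu_fin hdf)
    rw [← hsvh]
    exact mul_mem (Subsemigroup.subset_closure (Or.inl hs))
      (mul_mem (Subsemigroup.subset_closure (Or.inr (mem_insert_of_mem u rfl)))
        (Subsemigroup.subset_closure (Or.inl hh)))
  · exact Subsemigroup.subset_closure
      (Or.inl (mem_S12345_of_aleph0_le hcf₁ (hdf₁ ▸ hcu_inf.trans le_self_add) hkf₁))
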